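/- arXiv:2103.11144 — 4 statements merged into one kernel-verified Lean document; each statement's English description precedes it below -/
import Mathlib

section
/- For every choice of parameters W_x ∈ Matrix (Fin m) (Fin d) ℝ, W_e ∈ Matrix (Fin n) (Fin d) ℝ, and b ∈ (Fin d → ℝ), there exists a bias b' ∈ (Fin d → ℝ) such that the domain-randomized risk with the environment weights removed satisfies L(W_x, 0, b') ≤ L(W_x, W_e, b). (Paper's Proposition 1: an optimal set of parameters of the separable encoder family is achieved when the environment features are nullified, W_e = 0.) -/
open Finset

/-- The separable encoder `f[Wx, We, b](x, e) = σ(Wxᵀ (φx x) + Weᵀ (φe e) + b)`. -/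
noncomputable def encoder {X E : Type*} {d m n : ℕ}
    (φx : X → Fin m → ℝ) (φe : E → Fin n → ℝ)
    (σ : (Fin d → ℝ) → (Fin d → ℝ))
    (Wx : Matrix (Fin m) (Fin d) ℝ) (We : Matrix (Fin n) (Fin d) ℝ) (b : Fin d → ℝ)
    (x : X) (e : E) : Fin d → ℝ :=
  σ (Wx.transpose.mulVec (φx x) + We.transpose.mulVec (φe e) + b)

/-- The domain-randomized risk `L(Wx, We, b)`. -/
noncomputable def risk {X E Y : Type*} [Fintype X] [Fintype E] [Fintype Y] {d m n : ℕ}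
    (pE : E → ℝ) (pX : X → ℝ) (q : X → Y → ℝ)
    (φx : X → Fin m → ℝ) (φe : E → Fin n → ℝ)
    (σ : (Fin d → ℝ) → (Fin d → ℝ))
    (l : (Fin d → ℝ) → Y → ℝ)
    (Wx : Matrix (Fin m) (Fin d) ℝ) (We : Matrix (Fin n) (Fin d) ℝ) (b : Fin d → ℝ) : ℝ :=
  ∑ e, pE e * ∑ x, pX x * ∑ y, q x y * l (encoder φx φe σ Wx We b x e) y

/-- The fixed-domain risk `g(Wx, We, b; e₀)`. -/
noncomputable def fixedRisk {X E Y : Type*} [Fintype X] [Fintype Y] {d m n : ℕ}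
    (pX : X → ℝ) (q : X → Y → ℝ)
    (φx : X → Fin m → ℝ) (φe : E → Fin n → ℝ)
    (σ : (Fin d → ℝ) → (Fin d → ℝ))
    (l : (Fin d → ℝ) → Y → ℝ)
    (Wx : Matrix (Fin m) (Fin d) ℝ) (We : Matrix (Fin n) (Fin d) ℝ) (b : Fin d → ℝ)
    (e₀ : E) : ℝ :=
  ∑ x, pX x * ∑ y, q x y * l (encoder φx φe σ Wx We b x e₀) y

/-- Proposition 1: for every parameter triple there is a bias `b'` such that the
domain-invariant parameters `(Wx, 0, b')` do at least as well. -/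
theorem prop1_We_nullified
    {X E Y : Type*} [Fintype X] [Fintype E] [Fintype Y]
    [Nonempty X] [Nonempty E] [Nonempty Y]
    (pE : E → ℝ) (hpE : ∀ e, 0 ≤ pE e) (hpE1 : ∑ e, pE e = 1)
    (pX : X → ℝ) (hpX : ∀ x, 0 ≤ pX x) (hpX1 : ∑ x, pX x = 1)
    (q : X → Y → ℝ) (hq : ∀ x y, 0 ≤ q x y) (hq1 : ∀ x, ∑ y, q x y = 1)
    {d m n : ℕ}
    (φx : X → Fin m → ℝ) (φe : E → Fin n → ℝ)
    (σ : (Fin d → ℝ) → (Fin d → ℝ))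
    (l : (Fin d → ℝ) → Y → ℝ)
    (Wx : Matrix (Fin m) (Fin d) ℝ) (We : Matrix (Fin n) (Fin d) ℝ) (b : Fin d → ℝ) :
    ∃ b' : Fin d → ℝ,
      risk pE pX q φx φe σ l Wx 0 b' ≤ risk pE pX q φx φe σ l Wx We b := by
  obtain ⟨e₀, -, he₀⟩ := Finset.exists_min_image Finset.univ
    (fun e => fixedRisk pX q φx φe σ l Wx We b e) ⟨Classical.arbitrary E, Finset.mem_univ _⟩
  refine ⟨We.transpose.mulVec (φe e₀) + b, ?_⟩
  have hEnc : ∀ (x : X) (e : E), encoder φx φe σ Wx (0 : Matrix (Fin n) (Fin d) ℝ)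
      (We.transpose.mulVec (φe e₀) + b) x e = encoder φx φe σ Wx We b x e₀ := by
    intro x e
    simp only [encoder, Matrix.transpose_zero, Matrix.zero_mulVec, add_zero, add_assoc]
  have h1 : risk pE pX q φx φe σ l Wx 0 (We.transpose.mulVec (φe e₀) + b)
      = fixedRisk pX q φx φe σ l Wx We b e₀ := by
    unfold risk fixedRisk
    simp only [hEnc]
    rw [← Finset.sum_mul, hpE1, one_mul]
  have h2 : risk pE pX q φx φe σ l Wx We b
      = ∑ e, pE e * fixedRisk pX q φx φe σ l Wx We b e := rfl
  rw [h1, h2]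
  calc fixedRisk pX q φx φe σ l Wx We b e₀
      = ∑ e : E, pE e * fixedRisk pX q φx φe σ l Wx We b e₀ := by
        rw [← Finset.sum_mul, hpE1, one_mul]
    _ ≤ ∑ e, pE e * fixedRisk pX q φx φe σ l Wx We b e :=
        Finset.sum_le_sum fun e _ =>
          mul_le_mul_of_nonneg_left (he₀ e (Finset.mem_univ e)) (hpE e)
end

section
/- The infimum of the domain-randomized risk over all parameter triples equals the infimum over the domain-invariant subfamily: ⨅ over (W_x, W_e, b) of L(W_x, W_e, b) = ⨅ over (W_x, b) of L(W_x, 0, b), where the infima are taken in ℝ as the greatest lower bounds of the corresponding ranges. -/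
open Finset

/-- The infimum of the domain-randomized risk over all parameters equals the infimum
over the domain-invariant subfamily (with `We = 0`). -/
theorem inf_risk_eq_inf_invariant
    {X E Y : Type*} [Fintype X] [Fintype E] [Fintype Y]
    [Nonempty X] [Nonempty E] [Nonempty Y]
    (pE : E → ℝ) (hpE : ∀ e, 0 ≤ pE e) (hpE1 : ∑ e, pE e = 1)
    (pX : X → ℝ) (hpX : ∀ x, 0 ≤ pX x) (hpX1 : ∑ x, pX x = 1)
    (q : X → Y → ℝ) (hq : ∀ x y, 0 ≤ q x y) (hq1 : ∀ x, ∑ y, q x y = 1)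
    {d m n : ℕ}
    (φx : X → Fin m → ℝ) (φe : E → Fin n → ℝ)
    (σ : (Fin d → ℝ) → (Fin d → ℝ))
    (l : (Fin d → ℝ) → Y → ℝ)
    :
    sInf {r : ℝ | ∃ (Wx : Matrix (Fin m) (Fin d) ℝ) (We : Matrix (Fin n) (Fin d) ℝ)
        (b : Fin d → ℝ), r = risk pE pX q φx φe σ l Wx We b}
      = sInf {r : ℝ | ∃ (Wx : Matrix (Fin m) (Fin d) ℝ) (b : Fin d → ℝ),
        r = risk pE pX q φx φe σ l Wx 0 b} := by
  set S := {r : ℝ | ∃ (Wx : Matrix (Fin m) (Fin d) ℝ) (We : Matrix (Fin n) (Fin d) ℝ)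
      (b : Fin d → ℝ), r = risk pE pX q φx φe σ l Wx We b} with hS
  set T := {r : ℝ | ∃ (Wx : Matrix (Fin m) (Fin d) ℝ) (b : Fin d → ℝ),
      r = risk pE pX q φx φe σ l Wx 0 b} with hT
  have hTS : T ⊆ S := by
    rintro r ⟨Wx, b, rfl⟩
    exact ⟨Wx, 0, b, rfl⟩
  have hTne : T.Nonempty := ⟨_, ⟨0, 0, rfl⟩⟩
  have hSne : S.Nonempty := hTne.mono hTS
  have key : ∀ r ∈ S, ∃ s ∈ T, s ≤ r := by
    rintro r ⟨Wx, We, b, rfl⟩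
    obtain ⟨e₀, -, he₀⟩ := Finset.exists_min_image Finset.univ
      (fun e => fixedRisk pX q φx φe σ l Wx We b e) ⟨Classical.arbitrary E, Finset.mem_univ _⟩
    refine ⟨risk pE pX q φx φe σ l Wx 0 (We.transpose.mulVec (φe e₀) + b),
      ⟨Wx, _, rfl⟩, ?_⟩
    have h1 : risk pE pX q φx φe σ l Wx 0 (We.transpose.mulVec (φe e₀) + b)
        = fixedRisk pX q φx φe σ l Wx We b e₀ := by
      unfold risk fixedRisk encoder
      simp only [Matrix.transpose_zero, Matrix.zero_mulVec, add_zero, add_assoc]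
      rw [← Finset.sum_mul, hpE1, one_mul]
    rw [h1]
    have h2 : risk pE pX q φx φe σ l Wx We b
        = ∑ e, pE e * fixedRisk pX q φx φe σ l Wx We b e := rfl
    rw [h2]
    calc fixedRisk pX q φx φe σ l Wx We b e₀
        = ∑ e, pE e * fixedRisk pX q φx φe σ l Wx We b e₀ := by
          rw [← Finset.sum_mul, hpE1, one_mul]
      _ ≤ ∑ e, pE e * fixedRisk pX q φx φe σ l Wx We b e :=
          Finset.sum_le_sum fun e _ =>
            mul_le_mul_of_nonneg_left (he₀ e (Finset.mem_univ e)) (hpE e)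
  have hlb : lowerBounds S = lowerBounds T := by
    apply Set.Subset.antisymm
    · exact lowerBounds_mono_set hTS
    · intro x hx r hr
      obtain ⟨s, hs, hsr⟩ := key r hr
      exact (hx hs).trans hsr
  by_cases hbdd : BddBelow T
  · have hbS : BddBelow S := by
      obtain ⟨x, hx⟩ := hbdd
      exact ⟨x, hlb ▸ hx⟩
    apply le_antisymm
    · exact csInf_le_csInf hbS hTne hTS
    · apply le_csInf hSne
      intro r hr
      obtain ⟨s, hs, hsr⟩ := key r hr
      exact (csInf_le hbdd hs).trans hsr
  · have hbS : ¬ BddBelow S := fun ⟨x, hx⟩ => hbdd ⟨x, hlb ▸ hx⟩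
    rw [Real.sInf_of_not_bddBelow hbS, Real.sInf_of_not_bddBelow hbdd]
end

section
/- If a parameter triple (W_x*, W_e*, b*) attains the infimum of the domain-randomized risk L over all parameter triples (i.e., L(W_x*, W_e*, b*) ≤ L(W_x, W_e, b) for all W_x, W_e, b), then there exists a bias b' ∈ (Fin d → ℝ) such that the domain-invariant triple (W_x*, 0, b') also attains it: L(W_x*, 0, b') = L(W_x*, W_e*, b*), and hence L(W_x*, 0, b') ≤ L(W_x, W_e, b) for all W_x, W_e, b. -/
open Finset

/-- If a parameter triple attains the infimum of the domain-randomized risk, then some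
domain-invariant triple `(Wx*, 0, b')` attains it as well. -/
theorem invariant_minimizer_exists
    {X E Y : Type*} [Fintype X] [Fintype E] [Fintype Y]
    [Nonempty X] [Nonempty E] [Nonempty Y]
    (pE : E → ℝ) (hpE : ∀ e, 0 ≤ pE e) (hpE1 : ∑ e, pE e = 1)
    (pX : X → ℝ) (hpX : ∀ x, 0 ≤ pX x) (hpX1 : ∑ x, pX x = 1)
    (q : X → Y → ℝ) (hq : ∀ x y, 0 ≤ q x y) (hq1 : ∀ x, ∑ y, q x y = 1)
    {d m n : ℕ}
    (φx : X → Fin m → ℝ) (φe : E → Fin n → ℝ)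
    (σ : (Fin d → ℝ) → (Fin d → ℝ))
    (l : (Fin d → ℝ) → Y → ℝ)
    (Wxs : Matrix (Fin m) (Fin d) ℝ) (Wes : Matrix (Fin n) (Fin d) ℝ) (bs : Fin d → ℝ)
    (hmin : ∀ (Wx : Matrix (Fin m) (Fin d) ℝ) (We : Matrix (Fin n) (Fin d) ℝ)
      (b : Fin d → ℝ),
      risk pE pX q φx φe σ l Wxs Wes bs ≤ risk pE pX q φx φe σ l Wx We b) :
    ∃ b' : Fin d → ℝ,
      risk pE pX q φx φe σ l Wxs 0 b' = risk pE pX q φx φe σ l Wxs Wes bs ∧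
      ∀ (Wx : Matrix (Fin m) (Fin d) ℝ) (We : Matrix (Fin n) (Fin d) ℝ)
        (b : Fin d → ℝ),
        risk pE pX q φx φe σ l Wxs 0 b' ≤ risk pE pX q φx φe σ l Wx We b := by
  -- choose e₀ minimizing the fixed risk
  obtain ⟨e₀, -, he₀⟩ := Finset.exists_min_image Finset.univ
    (fun e => fixedRisk pX q φx φe σ l Wxs Wes bs e) ⟨Classical.arbitrary E, Finset.mem_univ _⟩
  set b' : Fin d → ℝ := Wes.transpose.mulVec (φe e₀) + bs with hb'
  have henc : ∀ (x : X) (e : E),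
      encoder φx φe σ Wxs 0 b' x e = encoder φx φe σ Wxs Wes bs x e₀ := by
    intro x e
    simp only [encoder, hb', Matrix.transpose_zero, Matrix.zero_mulVec]
    ring_nf
  have hfix : ∀ e, fixedRisk pX q φx φe σ l Wxs 0 b' e
      = fixedRisk pX q φx φe σ l Wxs Wes bs e₀ := by
    intro e
    unfold fixedRisk
    simp only [henc]
  have hrisk_eq : ∀ (Wx : Matrix (Fin m) (Fin d) ℝ) (We : Matrix (Fin n) (Fin d) ℝ)
      (b : Fin d → ℝ), risk pE pX q φx φe σ l Wx We b
      = ∑ e, pE e * fixedRisk pX q φx φe σ l Wx We b e := by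
    intro Wx We b; rfl
  -- risk of the invariant triple equals the fixed risk at e₀
  have h1 : risk pE pX q φx φe σ l Wxs 0 b' = fixedRisk pX q φx φe σ l Wxs Wes bs e₀ := by
    rw [hrisk_eq]
    simp only [hfix]
    rw [← Finset.sum_mul, hpE1, one_mul]
  -- fixed risk at e₀ is ≤ the randomized risk
  have h2 : fixedRisk pX q φx φe σ l Wxs Wes bs e₀ ≤ risk pE pX q φx φe σ l Wxs Wes bs := by
    rw [hrisk_eq]
    calc fixedRisk pX q φx φe σ l Wxs Wes bs e₀
        = ∑ e, pE e * fixedRisk pX q φx φe σ l Wxs Wes bs e₀ := by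
          rw [← Finset.sum_mul, hpE1, one_mul]
      _ ≤ ∑ e, pE e * fixedRisk pX q φx φe σ l Wxs Wes bs e :=
          Finset.sum_le_sum fun e _ => mul_le_mul_of_nonneg_left (he₀ e (Finset.mem_univ e)) (hpE e)
  have h3 : risk pE pX q φx φe σ l Wxs 0 b' = risk pE pX q φx φe σ l Wxs Wes bs :=
    le_antisymm (h1 ▸ h2) (hmin _ _ _)
  exact ⟨b', h3, fun Wx We b => h3 ▸ hmin Wx We b⟩
end

section
/- Strengthened form of Proposition 1: for every W_x ∈ Matrix (Fin m) (Fin d) ℝ, W_e ∈ Matrix (Fin n) (Fin d) ℝ, and b ∈ (Fin d → ℝ), there exists a bias b' ∈ (Fin d → ℝ) such that L(W_x, 0, b') = min over e₀ ∈ E of g(W_x, W_e, b; e₀), and therefore L(W_x, 0, b') ≤ L(W_x, W_e, b). Moreover the encoder f[W_x, 0, b'] is domain-invariant: f[W_x, 0, b'](x, e) = f[W_x, 0, b'](x, e') for all x ∈ X and e, e' ∈ E. -/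
open Finset

/-- Strengthened Proposition 1: there is a bias `b'` such that the domain-invariant
risk `L(Wx, 0, b')` equals the best fixed-domain risk, hence is at most
`L(Wx, We, b)`, and the resulting encoder is domain-invariant. -/
theorem prop1_strengthened
    {X E Y : Type*} [Fintype X] [Fintype E] [Fintype Y]
    [Nonempty X] [Nonempty E] [Nonempty Y]
    (pE : E → ℝ) (hpE : ∀ e, 0 ≤ pE e) (hpE1 : ∑ e, pE e = 1)
    (pX : X → ℝ) (hpX : ∀ x, 0 ≤ pX x) (hpX1 : ∑ x, pX x = 1)
    (q : X → Y → ℝ) (hq : ∀ x y, 0 ≤ q x y) (hq1 : ∀ x, ∑ y, q x y = 1)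
    {d m n : ℕ}
    (φx : X → Fin m → ℝ) (φe : E → Fin n → ℝ)
    (σ : (Fin d → ℝ) → (Fin d → ℝ))
    (l : (Fin d → ℝ) → Y → ℝ)
    (Wx : Matrix (Fin m) (Fin d) ℝ) (We : Matrix (Fin n) (Fin d) ℝ) (b : Fin d → ℝ) :
    ∃ b' : Fin d → ℝ,
      risk pE pX q φx φe σ l Wx 0 b'
        = Finset.univ.inf' Finset.univ_nonempty
            (fun e₀ : E => fixedRisk pX q φx φe σ l Wx We b e₀) ∧
      risk pE pX q φx φe σ l Wx 0 b' ≤ risk pE pX q φx φe σ l Wx We b ∧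
      ∀ (x : X) (e e' : E),
        encoder φx φe σ Wx 0 b' x e = encoder φx φe σ Wx 0 b' x e' := by

  obtain ⟨estar, -, hmin⟩ := Finset.exists_mem_eq_inf' (Finset.univ_nonempty (α := E))
    (fun e₀ : E => fixedRisk pX q φx φe σ l Wx We b e₀)
  refine ⟨We.transpose.mulVec (φe estar) + b, ?_, ?_, ?_⟩
  · have henc : ∀ x e, encoder φx φe σ Wx 0 (We.transpose.mulVec (φe estar) + b) x e
        = encoder φx φe σ Wx We b x estar := by
      intro x e
      simp [encoder, Matrix.transpose_zero, Matrix.zero_mulVec]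
      ring_nf
    have : risk pE pX q φx φe σ l Wx 0 (We.transpose.mulVec (φe estar) + b)
        = ∑ e, pE e * fixedRisk pX q φx φe σ l Wx We b estar := by
      unfold risk fixedRisk
      congr 1; ext e; congr 1; congr 1; ext x; congr 1; congr 1; ext y
      rw [henc]
    rw [this, ← Finset.sum_mul, hpE1, one_mul, hmin]
  · have henc : ∀ x e, encoder φx φe σ Wx 0 (We.transpose.mulVec (φe estar) + b) x e
        = encoder φx φe σ Wx We b x estar := by
      intro x e
      simp [encoder, Matrix.transpose_zero, Matrix.zero_mulVec]
      ring_nf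
    have h1 : risk pE pX q φx φe σ l Wx 0 (We.transpose.mulVec (φe estar) + b)
        = ∑ e, pE e * fixedRisk pX q φx φe σ l Wx We b estar := by
      unfold risk fixedRisk
      congr 1; ext e; congr 1; congr 1; ext x; congr 1; congr 1; ext y
      rw [henc]
    have h2 : risk pE pX q φx φe σ l Wx We b
        = ∑ e, pE e * fixedRisk pX q φx φe σ l Wx We b e := rfl
    rw [h1, h2, ← Finset.sum_mul, hpE1, one_mul]
    calc fixedRisk pX q φx φe σ l Wx We b estar
        = ∑ e, pE e * fixedRisk pX q φx φe σ l Wx We b estar := by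
          rw [← Finset.sum_mul, hpE1, one_mul]
      _ ≤ ∑ e, pE e * fixedRisk pX q φx φe σ l Wx We b e :=
          Finset.sum_le_sum fun e _ => mul_le_mul_of_nonneg_left
            (hmin ▸ Finset.inf'_le _ (Finset.mem_univ e)) (hpE e)
  · intro x e e'
    simp [encoder, Matrix.transpose_zero, Matrix.zero_mulVec]
end
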